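/- Let b be a nonextreme point of the unit ball of H^∞ and let a be the outer function with |a| = (1 - |b|²)^{1/2} on the circle and a(0) > 0. Then b ∈ ℋ(b) and ‖b‖²_{ℋ(b)} = |a(0)|^{-2} - 1. -/

import Mathlib

noncomputable section

open ContinuousLinearMap

/-- The Hardy space `H²` of the unit disc, realized as the Hilbert space of square-summable
Taylor-coefficient sequences. -/
abbrev H2 : Type := lp (fun _ : ℕ => ℂ) 2

/-- The value at `z` (for `z` in the unit disc) of the analytic function whose sequence of
Taylor coefficients is `f ∈ H²`. -/
def H2eval (f : H2) (z : ℂ) : ℂ := ∑' n : ℕ, f n * z ^ n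

/-- `b` belongs to the closed unit ball of `H^∞`: it is analytic and bounded by `1` on the
open unit disc. -/
def InUnitBallHinf (b : ℂ → ℂ) : Prop :=
  DifferentiableOn ℂ b (Metric.ball 0 1) ∧ ∀ z ∈ Metric.ball (0 : ℂ) 1, ‖b z‖ ≤ 1

/-- `T` is the analytic Toeplitz operator `T_b` on `H²`, i.e. the operator of multiplication
by `b`. -/
def IsMulOp (b : ℂ → ℂ) (T : H2 →L[ℂ] H2) : Prop :=
  ∀ (f : H2), ∀ z ∈ Metric.ball (0 : ℂ) 1, H2eval (T f) z = b z * H2eval f z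

/-- The norm of `h` in the operator-range space `M(T)` (the range of `T` with the inner
product making `T` a unitary from `(ker T)^⊥` onto it): the infimum (in fact the minimum) of
the norms of the `T`-preimages of `h`. -/
def rangeNorm (T : H2 →L[ℂ] H2) (h : H2) : ℝ :=
  sInf {r : ℝ | ∃ ξ : H2, T ξ = h ∧ ‖ξ‖ = r}

/-!
The map `W f = (-T_a T_b̄ f, (I - T_b T_b̄) f)` into `H² ⊕ H²` satisfies
`W*W = I - T_b T_b̄ = D_b²`, so the range norm of `D_b` can be read off through `W`: for `φ` in the
closure of the range of `W`, `W*φ ∈ ℋ(b)` with norm exactly `‖φ‖` (Hahn–Banach and Riesz give a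
preimage of norm at most `‖φ‖`, Cauchy–Schwarz on the range of `W` shows no preimage is shorter).
Because `T_a` has dense range, the orthogonal complement of the range of `W` consists of the pairs
`(T_a x, T_b x)`, so its closure contains every `(g, k)` with `T_ā g + T_b̄ k = 0`. Since
`T_ā 1 = a(0)`, the pair `φ = (a - a(0)⁻¹, b)` qualifies, `W*φ = b`, and
`‖φ‖² = ‖a‖² - 2 + a(0)⁻² + ‖b‖² = a(0)⁻² - 1`.
-/

open scoped InnerProductSpace ComplexConjugate

section OperatorRange

variable {𝕜 E F G : Type*} [RCLike 𝕜]
  [NormedAddCommGroup E] [InnerProductSpace 𝕜 E] [CompleteSpace E]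
  [NormedAddCommGroup F] [InnerProductSpace 𝕜 F] [CompleteSpace F]
  [NormedAddCommGroup G] [InnerProductSpace 𝕜 G] [CompleteSpace G]

theorem norm_apply_eq_of_adjoint_comp_self_eq {T : E →L[𝕜] F} {S : E →L[𝕜] G}
    (h : adjoint T ∘L T = adjoint S ∘L S) (x : E) : ‖T x‖ = ‖S x‖ := by
  rw [apply_norm_eq_sqrt_inner_adjoint_left, apply_norm_eq_sqrt_inner_adjoint_left, h]

theorem exists_apply_eq_norm_le_of_norm_inner_le (D : E →L[𝕜] F) {h : F} {C : ℝ} (hC : 0 ≤ C)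
    (hh : ∀ f, ‖⟪h, f⟫_𝕜‖ ≤ C * ‖adjoint D f‖) : ∃ ξ, D ξ = h ∧ ‖ξ‖ ≤ C := by
  let T : F →ₗ[𝕜] E := adjoint D
  have hker : LinearMap.ker T ≤ LinearMap.ker (innerₛₗ 𝕜 h) := fun f hf => by
    have hbound := hh f
    rwa [show adjoint D f = 0 from hf, norm_zero, mul_zero, norm_le_zero_iff] at hbound
  let ℓ : LinearMap.range T →ₗ[𝕜] 𝕜 :=
    (LinearMap.ker T).liftQ _ hker ∘ₗ T.quotKerEquivRange.symm.toLinearMap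
  have hℓ : ∀ f, ℓ ⟨T f, T.mem_range_self f⟩ = ⟪h, f⟫_𝕜 := fun f => by
    rw [LinearMap.comp_apply, LinearEquiv.coe_coe, LinearMap.quotKerEquivRange_symm_apply_image,
      Submodule.mkQ_apply, Submodule.liftQ_apply, innerₛₗ_apply_apply]
  obtain ⟨g, hg, hgn⟩ := exists_extension_norm_eq _ (ℓ.mkContinuous C fun ⟨_, f, hf⟩ => by
    subst hf; exact (hℓ f).symm ▸ hh f)
  refine ⟨(InnerProductSpace.toDual 𝕜 E).symm g, ext_inner_right 𝕜 fun f => ?_, ?_⟩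
  · rw [← adjoint_inner_right, InnerProductSpace.toDual_symm_apply]
    exact (hg ⟨_, T.mem_range_self f⟩).trans (hℓ f)
  · rw [LinearIsometryEquiv.norm_map, hgn]
    exact LinearMap.mkContinuous_norm_le _ hC _

theorem norm_le_of_apply_eq_adjoint_apply (D : E →L[𝕜] F) (W : F →L[𝕜] G)
    (hW : ∀ f, ‖W f‖ = ‖adjoint D f‖) {φ : G} (hφ : φ ∈ closure (Set.range W)) {ξ : E}
    (hξ : D ξ = adjoint W φ) : ‖φ‖ ≤ ‖ξ‖ := by
  have hbound : closure (Set.range W) ⊆ {v | ‖⟪v, φ⟫_𝕜‖ ≤ ‖v‖ * ‖ξ‖} := by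
    refine closure_minimal ?_ (isClosed_le (by fun_prop) (by fun_prop))
    rintro _ ⟨f, rfl⟩
    rw [Set.mem_ofPred_eq, ← adjoint_inner_right, ← hξ, ← adjoint_inner_left, hW]
    exact norm_inner_le_norm _ _
  have hφφ := hbound hφ
  rw [Set.mem_ofPred_eq, inner_self_eq_norm_sq_to_K, norm_pow, RCLike.norm_ofReal, abs_norm] at hφφ
  rcases (norm_nonneg φ).eq_or_lt with h0 | hpos
  · rw [← h0]; exact norm_nonneg ξ
  · nlinarith

end OperatorRange

theorem rangeNorm_adjoint_apply_eq {G : Type*} [NormedAddCommGroup G] [InnerProductSpace ℂ G]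
    [CompleteSpace G] (D : H2 →L[ℂ] H2) (W : H2 →L[ℂ] G) (hW : ∀ f, ‖W f‖ = ‖adjoint D f‖)
    {φ : G} (hφ : φ ∈ closure (Set.range W)) :
    adjoint W φ ∈ Set.range D ∧ rangeNorm D (adjoint W φ) = ‖φ‖ := by
  have hle : ∀ ξ, D ξ = adjoint W φ → ‖φ‖ ≤ ‖ξ‖ := fun ξ hξ =>
    norm_le_of_apply_eq_adjoint_apply D W hW hφ hξ
  obtain ⟨ξ, hξ, hξφ⟩ :=
      exists_apply_eq_norm_le_of_norm_inner_le D (h := adjoint W φ) (norm_nonneg φ) fun f => by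
    rw [← hW, ← inner_conj_symm, RCLike.norm_conj, adjoint_inner_right, mul_comm]
    exact norm_inner_le_norm _ _
  refine ⟨⟨ξ, hξ⟩, le_antisymm (csInf_le ⟨‖φ‖, ?_⟩ ⟨ξ, hξ, hξφ.antisymm (hle ξ hξ)⟩) ?_⟩
  · rintro _ ⟨η, hη, rfl⟩
    exact hle η hη
  · exact le_csInf ⟨_, ξ, hξ, rfl⟩ fun _ ⟨η, hη, hr⟩ => hr ▸ hle η hη

section DefectMap

variable {𝕜 E : Type*} [RCLike 𝕜] [NormedAddCommGroup E] [InnerProductSpace 𝕜 E]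
  [CompleteSpace E] (A B : E →L[𝕜] E)

def defectMap : E →L[𝕜] WithLp 2 (E × E) :=
  (WithLp.prodContinuousLinearEquiv 2 𝕜 E E).symm.toContinuousLinearMap ∘L
    (-(A ∘L adjoint B)).prod (1 - B ∘L adjoint B)

theorem defectMap_apply (f : E) :
    defectMap A B f = WithLp.toLp 2 (-A (adjoint B f), f - B (adjoint B f)) := rfl

theorem adjoint_defectMap_toLp (p q : E) :
    adjoint (defectMap A B) (WithLp.toLp 2 (p, q)) = q - B (adjoint A p + adjoint B q) := by
  refine ext_inner_left 𝕜 fun f => ?_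
  rw [adjoint_inner_right, defectMap_apply, WithLp.prod_inner_apply]
  simp only [inner_neg_left, inner_sub_left, inner_sub_right, map_add, inner_add_right,
    ← adjoint_inner_left B, adjoint_inner_right A, adjoint_inner_right B]
  ring

variable {A B}

theorem adjoint_defectMap_comp_self (hAB : adjoint A ∘L A = 1 - adjoint B ∘L B) :
    adjoint (defectMap A B) ∘L defectMap A B = 1 - B ∘L adjoint B := by
  ext f
  have h := congr($hAB (adjoint B f))
  simp only [comp_apply, one_apply_eq_self, sub_apply] at h ⊢
  rw [defectMap_apply, adjoint_defectMap_toLp, map_neg, h]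
  simp only [map_sub, neg_add_cancel, map_zero, sub_zero]

theorem exists_eq_toLp_of_mem_orthogonal_range_defectMap
    (hAB : adjoint A ∘L A = 1 - adjoint B ∘L B) (hA : DenseRange A) {ψ : WithLp 2 (E × E)}
    (hψ : ψ ∈ (defectMap A B).rangeᗮ) : ∃ x, ψ = WithLp.toLp 2 (A x, B x) := by
  obtain ⟨p, q⟩ := ψ
  rw [orthogonal_range, LinearMap.mem_ker, coe_coe, adjoint_defectMap_toLp, sub_eq_zero] at hψ
  set x := adjoint A p + adjoint B q
  have hp : adjoint A (p - A x) = 0 := by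
    have h := congr($hAB x)
    simp only [comp_apply, one_apply_eq_self, sub_apply] at h
    rw [map_sub, h, ← hψ]
    simp [x]
  have hpx : p - A x = 0 :=
    hA.eq_zero_of_inner_right 𝕜 fun y => by rw [← adjoint_inner_right, hp, inner_zero_right]
  rw [sub_eq_zero] at hpx
  exact ⟨x, by rw [hpx, hψ]⟩

theorem toLp_mem_closure_range_defectMap (hAB : adjoint A ∘L A = 1 - adjoint B ∘L B)
    (hA : DenseRange A) {g k : E} (hgk : adjoint A g + adjoint B k = 0) :
    WithLp.toLp 2 (g, k) ∈ closure (Set.range (defectMap A B)) := by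
  have hclosure : closure (Set.range (defectMap A B)) = ((defectMap A B).rangeᗮᗮ : Set _) := by
    rw [Submodule.orthogonal_orthogonal_eq_closure, Submodule.topologicalClosure_coe,
      LinearMap.coe_range, coe_coe]
  rw [hclosure, SetLike.mem_coe]
  refine (Submodule.mem_orthogonal _ _).mpr fun ψ hψ => ?_
  obtain ⟨x, rfl⟩ := exists_eq_toLp_of_mem_orthogonal_range_defectMap hAB hA hψ
  rw [WithLp.prod_inner_apply, ← adjoint_inner_right, ← adjoint_inner_right, ← inner_add_right,
    hgk, inner_zero_right]

theorem adjoint_apply_add_adjoint_apply_eq_zero (hAB : adjoint A ∘L A = 1 - adjoint B ∘L B)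
    {e : E} {r : ℝ} (hr : r ≠ 0) (he : adjoint A e = (r : 𝕜) • e) :
    adjoint A (A e - (r⁻¹ : 𝕜) • e) + adjoint B (B e) = 0 := by
  have h := congr($hAB e)
  simp only [comp_apply, one_apply_eq_self, sub_apply] at h
  rw [map_sub, h, map_smul, he, smul_smul, inv_mul_cancel₀ (RCLike.ofReal_ne_zero.mpr hr),
    one_smul]
  abel

theorem norm_toLp_sub_inv_smul_sq (hAB : adjoint A ∘L A = 1 - adjoint B ∘L B)
    {e : E} (he₁ : ‖e‖ = 1) {r : ℝ} (hr : r ≠ 0) (he : adjoint A e = (r : 𝕜) • e) :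
    ‖WithLp.toLp 2 (A e - (r⁻¹ : 𝕜) • e, B e)‖ ^ 2 = (r ^ 2)⁻¹ - 1 := by
  have hsum : ‖A e‖ ^ 2 + ‖B e‖ ^ 2 = 1 := by
    rw [apply_norm_sq_eq_inner_adjoint_left, apply_norm_sq_eq_inner_adjoint_left, ← map_add,
      ← inner_add_left, hAB, sub_apply, sub_add_cancel, one_apply_eq_self,
      inner_self_eq_norm_sq, he₁, one_pow]
  have hinner : ⟪A e, (r⁻¹ : 𝕜) • e⟫_𝕜 = 1 := by
    rw [inner_smul_right, ← adjoint_inner_right, he, inner_smul_right,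
      inner_self_eq_norm_sq_to_K, he₁, RCLike.ofReal_one, one_pow, mul_one,
      inv_mul_cancel₀ (RCLike.ofReal_ne_zero.mpr hr)]
  rw [WithLp.prod_norm_sq_eq_of_L2, WithLp.toLp_fst, WithLp.toLp_snd, @norm_sub_sq 𝕜, hinner,
    norm_smul, he₁, mul_one, norm_inv, RCLike.norm_ofReal, inv_pow, sq_abs, RCLike.one_re]
  linarith

end DefectMap

section Hardy

theorem summable_H2_mul_pow (f : H2) {z : ℂ} (hz : ‖z‖ < 1) :
    Summable fun n : ℕ => f n * z ^ n := by
  refine Summable.of_norm_bounded ((summable_geometric_of_lt_one (norm_nonneg z) hz).mul_left ‖f‖)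
    fun n => ?_
  rw [norm_mul, norm_pow]
  gcongr
  exact lp.norm_apply_le_norm two_ne_zero f n

theorem hasFPowerSeriesOnBall_H2eval (f : H2) :
    HasFPowerSeriesOnBall (H2eval f) (FormalMultilinearSeries.ofScalars ℂ fun n => f n) 0 1 where
  r_le := FormalMultilinearSeries.le_radius_of_bound _ ‖f‖ fun n => by
    simpa [FormalMultilinearSeries.ofScalars_norm] using lp.norm_apply_le_norm two_ne_zero f n
  r_pos := one_pos
  hasSum {y} hy := by
    rw [mem_eball_zero_iff, ← ofReal_norm, ENNReal.ofReal_lt_one] at hy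
    simp only [FormalMultilinearSeries.ofScalars_apply_eq, smul_eq_mul, zero_add]
    exact (summable_H2_mul_pow f hy).hasSum

theorem eq_of_H2eval_eq {f g : H2} (h : ∀ z ∈ Metric.ball (0 : ℂ) 1, H2eval f z = H2eval g z) :
    f = g := by
  have hseries := (hasFPowerSeriesOnBall_H2eval f).hasFPowerSeriesAt
    |>.eq_formalMultilinearSeries_of_eventually (hasFPowerSeriesOnBall_H2eval g).hasFPowerSeriesAt
    (Filter.eventuallyEq_of_mem (Metric.ball_mem_nhds 0 one_pos) h)
  exact lp.ext (FormalMultilinearSeries.ofScalars_series_injective ℂ ℂ hseries)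

theorem H2eval_zero (f : H2) : H2eval f 0 = f 0 := by
  rw [H2eval, tsum_eq_single 0 fun n hn => by simp [zero_pow hn]]
  simp

def H2one : H2 := lp.single 2 0 1

theorem H2eval_H2one (z : ℂ) : H2eval H2one z = 1 := by
  rw [H2eval, tsum_eq_single 0 fun n hn => by simp [H2one, hn]]
  simp [H2one]

theorem norm_H2one : ‖H2one‖ = 1 := by
  simp [H2one, lp.norm_single (E := fun _ : ℕ => ℂ) two_pos 0 (1 : ℂ)]

theorem inner_H2one_left (f : H2) : ⟪H2one, f⟫_ℂ = f 0 := by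
  simpa [H2one] using lp.inner_single_left (𝕜 := ℂ) 0 (1 : ℂ) f

variable {b : ℂ → ℂ} {T : H2 →L[ℂ] H2}

theorem IsMulOp.apply_H2one (hT : IsMulOp b T) {f : H2}
    (hf : ∀ z ∈ Metric.ball (0 : ℂ) 1, H2eval f z = b z) : T H2one = f :=
  eq_of_H2eval_eq fun z hz => by rw [hT H2one z hz, H2eval_H2one, mul_one, hf z hz]

theorem IsMulOp.adjoint_apply_H2one (hT : IsMulOp b T) : adjoint T H2one = conj (b 0) • H2one := by
  refine ext_inner_right ℂ fun f => ?_
  have h0 := hT f 0 (Metric.mem_ball_self one_pos)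
  rw [H2eval_zero, H2eval_zero] at h0
  rw [adjoint_inner_left, inner_smul_left, inner_H2one_left, inner_H2one_left, h0,
    Complex.conj_conj]

end Hardy

/-- Outerness of `a` is encoded as density of `aH²`, the boundary relation `|a|² + |b|² = 1` as the
Toeplitz identity `T_{ā}T_a = I - T_{b̄}T_b`, and `ℋ(b)` as the range of
`D_b = (I - T_b T_{b̄})^{1/2}` with the range norm. -/
theorem stmt17_general (b : ℂ → ℂ)
    (Tb : H2 →L[ℂ] H2) (hTb : IsMulOp b Tb)
    (bseq : H2) (hbseq : ∀ z ∈ Metric.ball (0 : ℂ) 1, H2eval bseq z = b z)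
    (a : ℂ → ℂ)
    (Ta : H2 →L[ℂ] H2) (hTa : IsMulOp a Ta)
    (houter : Dense (Set.range Ta))
    (hrel : adjoint Ta ∘L Ta = 1 - adjoint Tb ∘L Tb)
    (ha0 : (a 0).im = 0 ∧ 0 < (a 0).re)
    (Db : H2 →L[ℂ] H2) (hDb_pos : Db.IsPositive)
    (hDb_sq : Db ∘L Db = 1 - Tb ∘L adjoint Tb) :
    bseq ∈ Set.range Db ∧
    (rangeNorm Db bseq) ^ 2 = 1 / ‖a 0‖ ^ 2 - 1 := by
  set r := (a 0).re
  have ha0r : a 0 = r := Complex.ext rfl ha0.1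
  have hr : r ≠ 0 := ha0.2.ne'
  have hTa_one : adjoint Ta H2one = (r : ℂ) • H2one := by
    rw [hTa.adjoint_apply_H2one, ha0r, Complex.conj_ofReal]
  have hTb_one : Tb H2one = bseq := hTb.apply_H2one hbseq
  have hDb : adjoint Db = Db := hDb_pos.isSelfAdjoint.adjoint_eq
  have hW : ∀ f, ‖defectMap Ta Tb f‖ = ‖adjoint Db f‖ := norm_apply_eq_of_adjoint_comp_self_eq <| by
    rw [adjoint_defectMap_comp_self hrel, hDb, hDb, hDb_sq]
  have hφ := adjoint_apply_add_adjoint_apply_eq_zero hrel hr hTa_one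
  obtain ⟨hmem, hnorm⟩ := rangeNorm_adjoint_apply_eq Db _ hW
    (toLp_mem_closure_range_defectMap hrel houter hφ)
  rw [adjoint_defectMap_toLp, hφ, map_zero, sub_zero, hTb_one] at hmem hnorm
  refine ⟨hmem, ?_⟩
  rw [hnorm, ← hTb_one, norm_toLp_sub_inv_smul_sq hrel norm_H2one hr hTa_one, ha0r,
    Complex.norm_real, Real.norm_eq_abs, sq_abs, one_div]

/-- Let `b` be a nonextreme point of the unit ball of `H^∞` and let `a` be
the outer function with `|a|² + |b|² = 1` on the circle and `a(0) > 0`.  (Outerness is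
expressed by `aH²` being dense in `H²`, i.e. `T_a` having dense range; the boundary relation
`|a|² + |b|² = 1` is expressed by the Toeplitz identity `T_{ā}T_a = I - T_{b̄}T_b`; the
existence of such an `a` is exactly nonextremeness of `b`.)  Then `b ∈ ℋ(b)` and
`‖b‖²_{ℋ(b)} = |a(0)|⁻² - 1`, where `ℋ(b)` is the range of `D_b = (I - T_b T_{b̄})^{1/2}`
with the range norm. -/
theorem stmt17 (b : ℂ → ℂ) (hb : InUnitBallHinf b)
    (Tb : H2 →L[ℂ] H2) (hTb : IsMulOp b Tb)
    (bseq : H2) (hbseq : ∀ z ∈ Metric.ball (0 : ℂ) 1, H2eval bseq z = b z)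
    (a : ℂ → ℂ) (ha : InUnitBallHinf a)
    (Ta : H2 →L[ℂ] H2) (hTa : IsMulOp a Ta)
    (houter : Dense (Set.range Ta))
    (hrel : adjoint Ta ∘L Ta = 1 - adjoint Tb ∘L Tb)
    (ha0 : (a 0).im = 0 ∧ 0 < (a 0).re)
    (Db : H2 →L[ℂ] H2) (hDb_pos : Db.IsPositive)
    (hDb_sq : Db ∘L Db = 1 - Tb ∘L adjoint Tb) :
    bseq ∈ Set.range Db ∧
    (rangeNorm Db bseq) ^ 2 = 1 / ‖a 0‖ ^ 2 - 1 :=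
  stmt17_general b Tb hTb bseq hbseq a Ta hTa houter hrel ha0 Db hDb_pos hDb_sq
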